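/- There exists a balanced quadtree that admits no proper coloring with 4 colors under corner adjacency; hence at least five colors are sometimes necessary for balanced quadtrees under corner adjacency. -/
import Mathlib


/-- A dyadic square `[i/2^k, (i+1)/2^k] × [j/2^k, (j+1)/2^k] ⊆ [0,1]²`,
recorded by its level `k` and coordinates `i, j < 2^k`. -/
structure DyadicSquare where
  k : ℕ
  i : ℕ
  j : ℕ
  hi : i < 2 ^ k
  hj : j < 2 ^ k
deriving DecidableEq

namespace DyadicSquare

/-- The subset of the plane occupied by a dyadic square. -/
def region (s : DyadicSquare) : Set (ℝ × ℝ) :=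
  Set.Icc ((s.i : ℝ) / 2 ^ s.k) (((s.i : ℝ) + 1) / 2 ^ s.k) ×ˢ
    Set.Icc ((s.j : ℝ) / 2 ^ s.k) (((s.j : ℝ) + 1) / 2 ^ s.k)

/-- Two squares are edge-adjacent if they are distinct and their intersection
contains more than one point (a segment of positive length). -/
def EdgeAdj (s t : DyadicSquare) : Prop :=
  s ≠ t ∧ (s.region ∩ t.region).Nontrivial

/-- Two squares are corner-adjacent if they are distinct and their intersection
is nonempty (they share at least a corner point or part of an edge). -/
def CornerAdj (s t : DyadicSquare) : Prop :=
  s ≠ t ∧ (s.region ∩ t.region).Nonempty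

end DyadicSquare

/-- A finite set of dyadic squares has pairwise disjoint interiors. -/
def PairwiseDisjointInteriors (Q : Finset DyadicSquare) : Prop :=
  (Q : Set DyadicSquare).Pairwise fun s t =>
    interior s.region ∩ interior t.region = ∅

/-- A quadtree: a finite set of dyadic squares with pairwise disjoint interiors
whose union is the unit square `[0,1]²`. -/
def IsQuadtree (Q : Finset DyadicSquare) : Prop :=
  PairwiseDisjointInteriors Q ∧
    (⋃ s ∈ Q, s.region) = Set.Icc (0 : ℝ) 1 ×ˢ Set.Icc (0 : ℝ) 1

/-- A quadtree is balanced if any two edge-adjacent squares have side lengths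
(`2^{-k}`) within a factor of two of each other. -/
def IsBalanced (Q : Finset DyadicSquare) : Prop :=
  ∀ s ∈ Q, ∀ t ∈ Q, DyadicSquare.EdgeAdj s t → s.k ≤ t.k + 1 ∧ t.k ≤ s.k + 1

open Set

lemma succ_cast (a : ℕ) : ((a:ℝ)+1) = ((a+1 : ℕ):ℝ) := by push_cast; ring

lemma dy_le {a k b l : ℕ} : (a:ℝ)/2^k ≤ (b:ℝ)/2^l ↔ a * 2^l ≤ b * 2^k := by
  rw [div_le_div_iff₀ (by positivity) (by positivity)]
  norm_cast

lemma dy_lt {a k b l : ℕ} : (a:ℝ)/2^k < (b:ℝ)/2^l ↔ a * 2^l < b * 2^k := by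
  rw [div_lt_div_iff₀ (by positivity) (by positivity)]
  norm_cast

namespace DyadicSquare

def covX (s t : DyadicSquare) : Prop :=
  t.i * 2^s.k ≤ (s.i+1) * 2^t.k ∧ s.i * 2^t.k ≤ (t.i+1) * 2^s.k
def covY (s t : DyadicSquare) : Prop :=
  t.j * 2^s.k ≤ (s.j+1) * 2^t.k ∧ s.j * 2^t.k ≤ (t.j+1) * 2^s.k
def strX (s t : DyadicSquare) : Prop :=
  t.i * 2^s.k < (s.i+1) * 2^t.k ∧ s.i * 2^t.k < (t.i+1) * 2^s.k
def strY (s t : DyadicSquare) : Prop :=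
  t.j * 2^s.k < (s.j+1) * 2^t.k ∧ s.j * 2^t.k < (t.j+1) * 2^s.k
def sep (s t : DyadicSquare) : Prop :=
  (s.i+1) * 2^t.k ≤ t.i * 2^s.k ∨ (t.i+1) * 2^s.k ≤ s.i * 2^t.k ∨
  (s.j+1) * 2^t.k ≤ t.j * 2^s.k ∨ (t.j+1) * 2^s.k ≤ s.j * 2^t.k

instance (s t : DyadicSquare) : Decidable (covX s t) := by unfold covX; infer_instance
instance (s t : DyadicSquare) : Decidable (covY s t) := by unfold covY; infer_instance
instance (s t : DyadicSquare) : Decidable (strX s t) := by unfold strX; infer_instance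
instance (s t : DyadicSquare) : Decidable (strY s t) := by unfold strY; infer_instance
instance (s t : DyadicSquare) : Decidable (sep s t) := by unfold sep; infer_instance

lemma inter_eq (s t : DyadicSquare) :
    s.region ∩ t.region =
      Icc (max ((s.i:ℝ)/2^s.k) ((t.i:ℝ)/2^t.k)) (min (((s.i:ℝ)+1)/2^s.k) (((t.i:ℝ)+1)/2^t.k)) ×ˢ
      Icc (max ((s.j:ℝ)/2^s.k) ((t.j:ℝ)/2^t.k)) (min (((s.j:ℝ)+1)/2^s.k) (((t.j:ℝ)+1)/2^t.k)) := by
  rw [region, region, Set.prod_inter_prod, Set.Icc_inter_Icc, Set.Icc_inter_Icc]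

lemma own_le (a k : ℕ) : (a:ℝ)/2^k ≤ ((a:ℝ)+1)/2^k := by
  gcongr
  linarith

lemma corner_of_nat {s t : DyadicSquare} (hne : s ≠ t) (hx : covX s t) (hy : covY s t) :
    CornerAdj s t := by
  refine ⟨hne, ?_⟩
  rw [inter_eq]
  apply Set.Nonempty.prod <;> rw [Set.nonempty_Icc] <;>
    refine max_le (le_min (own_le _ _) ?_) (le_min ?_ (own_le _ _))
  · rw [succ_cast, dy_le]; exact hx.2
  · rw [succ_cast, dy_le]; exact hx.1
  · rw [succ_cast, dy_le]; exact hy.2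
  · rw [succ_cast, dy_le]; exact hy.1

lemma edge_nat {s t : DyadicSquare} (h : EdgeAdj s t) :
    covX s t ∧ covY s t ∧ (strX s t ∨ strY s t) := by
  obtain ⟨-, hnt⟩ := h
  rw [inter_eq] at hnt
  obtain ⟨p, hp, q, hq, hpq⟩ := hnt
  obtain ⟨hp1, hp2⟩ := hp
  obtain ⟨hq1, hq2⟩ := hq
  have hx1 : max ((s.i:ℝ)/2^s.k) ((t.i:ℝ)/2^t.k) ≤ min (((s.i:ℝ)+1)/2^s.k) (((t.i:ℝ)+1)/2^t.k) :=
    le_trans hp1.1 hp1.2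
  have hy1 : max ((s.j:ℝ)/2^s.k) ((t.j:ℝ)/2^t.k) ≤ min (((s.j:ℝ)+1)/2^s.k) (((t.j:ℝ)+1)/2^t.k) :=
    le_trans hp2.1 hp2.2
  have covx : covX s t := by
    constructor
    · rw [← dy_le, ← succ_cast]; exact le_trans (le_max_right _ _) (hx1.trans (min_le_left _ _))
    · rw [← dy_le, ← succ_cast]; exact le_trans (le_max_left _ _) (hx1.trans (min_le_right _ _))
  have covy : covY s t := by
    constructor
    · rw [← dy_le, ← succ_cast]; exact le_trans (le_max_right _ _) (hy1.trans (min_le_left _ _))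
    · rw [← dy_le, ← succ_cast]; exact le_trans (le_max_left _ _) (hy1.trans (min_le_right _ _))
  refine ⟨covx, covy, ?_⟩
  have hor : p.1 ≠ q.1 ∨ p.2 ≠ q.2 := by
    by_contra hc
    push_neg at hc
    exact hpq (Prod.ext hc.1 hc.2)
  rcases hor with h1 | h2
  · left
    have hlt : max ((s.i:ℝ)/2^s.k) ((t.i:ℝ)/2^t.k) < min (((s.i:ℝ)+1)/2^s.k) (((t.i:ℝ)+1)/2^t.k) := by
      rcases lt_or_gt_of_ne h1 with hlt | hlt
      · exact lt_of_le_of_lt hp1.1 (lt_of_lt_of_le hlt hq1.2)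
      · exact lt_of_le_of_lt hq1.1 (lt_of_lt_of_le hlt hp1.2)
    constructor
    · rw [← dy_lt, ← succ_cast]; exact lt_of_le_of_lt (le_max_right _ _) (hlt.trans_le (min_le_left _ _))
    · rw [← dy_lt, ← succ_cast]; exact lt_of_le_of_lt (le_max_left _ _) (hlt.trans_le (min_le_right _ _))
  · right
    have hlt : max ((s.j:ℝ)/2^s.k) ((t.j:ℝ)/2^t.k) < min (((s.j:ℝ)+1)/2^s.k) (((t.j:ℝ)+1)/2^t.k) := by
      rcases lt_or_gt_of_ne h2 with hlt | hlt
      · exact lt_of_le_of_lt hp2.1 (lt_of_lt_of_le hlt hq2.2)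
      · exact lt_of_le_of_lt hq2.1 (lt_of_lt_of_le hlt hp2.2)
    constructor
    · rw [← dy_lt, ← succ_cast]; exact lt_of_le_of_lt (le_max_right _ _) (hlt.trans_le (min_le_left _ _))
    · rw [← dy_lt, ← succ_cast]; exact lt_of_le_of_lt (le_max_left _ _) (hlt.trans_le (min_le_right _ _))

lemma disj_of_nat {s t : DyadicSquare} (h : sep s t) :
    interior s.region ∩ interior t.region = ∅ := by
  rw [region, region, interior_prod_eq, interior_prod_eq, interior_Icc, interior_Icc,
    interior_Icc, interior_Icc]
  ext p
  simp only [Set.mem_inter_iff, Set.mem_prod, Set.mem_Ioo, Set.mem_empty_iff_false, iff_false]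
  rintro ⟨⟨⟨ha1, ha2⟩, hb1, hb2⟩, ⟨hc1, hc2⟩, hd1, hd2⟩
  rcases h with h | h | h | h
  · rw [← dy_le, ← succ_cast] at h; linarith
  · rw [← dy_le, ← succ_cast] at h; linarith
  · rw [← dy_le, ← succ_cast] at h; linarith
  · rw [← dy_le, ← succ_cast] at h; linarith

end DyadicSquare

def rOf (k i j : ℕ) : Set (ℝ × ℝ) :=
  Set.Icc ((i : ℝ) / 2 ^ k) (((i : ℝ) + 1) / 2 ^ k) ×ˢ
    Set.Icc ((j : ℝ) / 2 ^ k) (((j : ℝ) + 1) / 2 ^ k)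

lemma Icc_split (k a : ℕ) :
    Icc ((a:ℝ)/2^k) (((a:ℝ)+1)/2^k) =
      Icc (((2*a : ℕ):ℝ)/2^(k+1)) ((((2*a : ℕ):ℝ)+1)/2^(k+1)) ∪
      Icc (((2*a+1 : ℕ):ℝ)/2^(k+1)) ((((2*a+1 : ℕ):ℝ)+1)/2^(k+1)) := by
  have h1 : (((2*a : ℕ):ℝ))/2^(k+1) = (a:ℝ)/2^k := by
    push_cast; rw [pow_succ]; ring
  have h2 : (((2*a : ℕ):ℝ)+1)/2^(k+1) = (((2*a+1 : ℕ):ℝ))/2^(k+1) := by push_cast; ring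
  have h3 : (((2*a+1 : ℕ):ℝ)+1)/2^(k+1) = ((a:ℝ)+1)/2^k := by
    push_cast; rw [pow_succ]; ring
  rw [h1, h2, h3, Set.Icc_union_Icc_eq_Icc]
  · rw [← h1]; gcongr; push_cast; linarith
  · rw [← h3]; gcongr; push_cast; linarith

lemma rOf_split (k i j : ℕ) :
    rOf k i j = (rOf (k+1) (2*i) (2*j) ∪ rOf (k+1) (2*i+1) (2*j)) ∪
                (rOf (k+1) (2*i) (2*j+1) ∪ rOf (k+1) (2*i+1) (2*j+1)) := by
  rw [rOf, Icc_split k i, Icc_split k j, Set.union_prod, Set.prod_union, Set.prod_union]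
  rw [rOf, rOf, rOf, rOf]
  ac_rfl

inductive QT | leaf | node (a b c d : QT)

def us : QT → ℕ → ℕ → ℕ → Set (ℝ × ℝ)
  | .leaf, k, i, j => rOf k i j
  | .node a b c d, k, i, j =>
      (us a (k+1) (2*i) (2*j) ∪ us b (k+1) (2*i+1) (2*j)) ∪
      (us c (k+1) (2*i) (2*j+1) ∪ us d (k+1) (2*i+1) (2*j+1))

lemma us_eq (t : QT) : ∀ k i j, us t k i j = rOf k i j := by
  induction t with
  | leaf => intro k i j; rfl
  | node a b c d ha hb hc hd =>
      intro k i j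
      rw [us, ha, hb, hc, hd, ← rOf_split]


lemma fin4 : ∀ x : Fin 4, x = 0 ∨ x = 1 ∨ x = 2 ∨ x = 3 := by decide

lemma key0 (y1 y2 y4 y5 y6 y7 y9 y10 y12 y13 y14 y16 y17 y18 y20 y21 y23 y24 y25 : Fin 4)
    (h0 : y1 ≠ y2)
    (h1 : y1 ≠ y4)
    (h2 : y1 ≠ y5)
    (h3 : y1 ≠ y12)
    (h4 : y2 ≠ y5)
    (h5 : y2 ≠ y12)
    (h6 : y2 ≠ y13)
    (h7 : y2 ≠ y14)
    (h8 : y4 ≠ y5)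
    (h9 : y4 ≠ y6)
    (h10 : y4 ≠ y7)
    (h11 : y5 ≠ y6)
    (h12 : y5 ≠ y7)
    (h13 : y5 ≠ y12)
    (h14 : y5 ≠ y16)
    (h15 : y5 ≠ y20)
    (h16 : y6 ≠ y7)
    (h17 : y6 ≠ y9)
    (h18 : y7 ≠ y9)
    (h19 : y7 ≠ y10)
    (h20 : y7 ≠ y16)
    (h21 : y7 ≠ y20)
    (h22 : y7 ≠ y23)
    (h23 : y9 ≠ y10)
    (h24 : y9 ≠ y23)
    (h25 : y10 ≠ y23)
    (h26 : y10 ≠ y24)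
    (h27 : y10 ≠ y25)
    (h28 : y12 ≠ y13)
    (h29 : y12 ≠ y16)
    (h30 : y12 ≠ y17)
    (h31 : y13 ≠ y14)
    (h32 : y13 ≠ y16)
    (h33 : y13 ≠ y17)
    (h34 : y13 ≠ y18)
    (h35 : y14 ≠ y17)
    (h36 : y14 ≠ y18)
    (h37 : y16 ≠ y17)
    (h38 : y16 ≠ y20)
    (h39 : y16 ≠ 0)
    (h40 : y17 ≠ y18)
    (h41 : y17 ≠ y20)
    (h42 : y17 ≠ y21)
    (h43 : y17 ≠ 0)
    (h44 : y17 ≠ 1)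
    (h45 : y18 ≠ y21)
    (h46 : y18 ≠ 1)
    (h47 : y20 ≠ y23)
    (h48 : y20 ≠ y24)
    (h49 : y20 ≠ 0)
    (h50 : y20 ≠ 2)
    (h51 : y21 ≠ y24)
    (h52 : y21 ≠ y25)
    (h53 : y21 ≠ 1)
    (h54 : y21 ≠ 3)
    (h55 : y23 ≠ y24)
    (h56 : y23 ≠ 2)
    (h57 : y24 ≠ y25)
    (h58 : y24 ≠ 2)
    (h59 : y24 ≠ 3)
    (h60 : y25 ≠ 3) : False := by
  rcases fin4 y17 with rfl|rfl|rfl|rfl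
  · exact h43 rfl
  · exact h44 rfl
  ·
    rcases fin4 y21 with rfl|rfl|rfl|rfl
    ·
      rcases fin4 y18 with rfl|rfl|rfl|rfl
      · exact h45 rfl
      · exact h46 rfl
      · exact h40 rfl
      ·
        rcases fin4 y24 with rfl|rfl|rfl|rfl
        · exact h51 rfl
        ·
          rcases fin4 y20 with rfl|rfl|rfl|rfl
          · exact h49 rfl
          · exact h48 rfl
          · exact h41 rfl
          ·
            rcases fin4 y16 with rfl|rfl|rfl|rfl
            · exact h39 rfl
            ·
              rcases fin4 y13 with rfl|rfl|rfl|rfl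
              ·
                rcases fin4 y12 with rfl|rfl|rfl|rfl
                · exact h28 rfl
                · exact h29 rfl
                · exact h30 rfl
                ·
                  rcases fin4 y14 with rfl|rfl|rfl|rfl
                  · exact h31 rfl
                  ·
                    rcases fin4 y2 with rfl|rfl|rfl|rfl
                    · exact h6 rfl
                    · exact h7 rfl
                    ·
                      rcases fin4 y5 with rfl|rfl|rfl|rfl
                      ·
                        rcases fin4 y1 with rfl|rfl|rfl|rfl
                        · exact h2 rfl
                        ·
                          rcases fin4 y7 with rfl|rfl|rfl|rfl
                          · exact h12 rfl
                          · exact h20 rfl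
                          ·
                            rcases fin4 y4 with rfl|rfl|rfl|rfl
                            · exact h8 rfl
                            · exact h1 rfl
                            · exact h10 rfl
                            ·
                              rcases fin4 y6 with rfl|rfl|rfl|rfl
                              · exact h11 rfl
                              ·
                                rcases fin4 y23 with rfl|rfl|rfl|rfl
                                ·
                                  rcases fin4 y9 with rfl|rfl|rfl|rfl
                                  · exact h24 rfl
                                  · exact h17 rfl
                                  · exact h18 rfl
                                  ·
                                    rcases fin4 y10 with rfl|rfl|rfl|rfl
                                    · exact h25 rfl
                                    · exact h26 rfl
                                    · exact h19 rfl
                                    · exact h23 rfl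
                                · exact h55 rfl
                                · exact h22 rfl
                                · exact h47 rfl
                              · exact h16 rfl
                              · exact h9 rfl
                          · exact h21 rfl
                        · exact h0 rfl
                        · exact h3 rfl
                      · exact h14 rfl
                      · exact h4 rfl
                      · exact h13 rfl
                    · exact h5 rfl
                  · exact h35 rfl
                  · exact h36 rfl
              · exact h32 rfl
              · exact h33 rfl
              · exact h34 rfl
            · exact h37 rfl
            · exact h38 rfl
        · exact h58 rfl
        · exact h59 rfl
    · exact h53 rfl
    · exact h42 rfl
    · exact h54 rfl
  ·
    rcases fin4 y20 with rfl|rfl|rfl|rfl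
    · exact h49 rfl
    ·
      rcases fin4 y16 with rfl|rfl|rfl|rfl
      · exact h39 rfl
      · exact h38 rfl
      ·
        rcases fin4 y24 with rfl|rfl|rfl|rfl
        ·
          rcases fin4 y21 with rfl|rfl|rfl|rfl
          · exact h51 rfl
          · exact h53 rfl
          ·
            rcases fin4 y18 with rfl|rfl|rfl|rfl
            ·
              rcases fin4 y13 with rfl|rfl|rfl|rfl
              · exact h34 rfl
              ·
                rcases fin4 y12 with rfl|rfl|rfl|rfl
                ·
                  rcases fin4 y5 with rfl|rfl|rfl|rfl
                  · exact h13 rfl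
                  · exact h15 rfl
                  · exact h14 rfl
                  ·
                    rcases fin4 y2 with rfl|rfl|rfl|rfl
                    · exact h5 rfl
                    · exact h6 rfl
                    ·
                      rcases fin4 y14 with rfl|rfl|rfl|rfl
                      · exact h36 rfl
                      · exact h31 rfl
                      · exact h7 rfl
                      · exact h35 rfl
                    · exact h4 rfl
                · exact h28 rfl
                · exact h29 rfl
                · exact h30 rfl
              · exact h32 rfl
              · exact h33 rfl
            · exact h46 rfl
            · exact h45 rfl
            · exact h40 rfl
          · exact h42 rfl
        · exact h48 rfl
        · exact h58 rfl
        · exact h59 rfl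
      · exact h37 rfl
    · exact h50 rfl
    · exact h41 rfl


def gmap (a b c d v : Fin 4) : Fin 4 := if v = a then 0 else if v = b then 1 else if v = c then 2 else 3

lemma gmap_ne : ∀ a b c d : Fin 4, a ≠ b → a ≠ c → a ≠ d → b ≠ c → b ≠ d → c ≠ d →
    ∀ u v : Fin 4, u ≠ v → gmap a b c d u ≠ gmap a b c d v := by decide
lemma gmap_a : ∀ a b c d : Fin 4, gmap a b c d a = 0 := by decide
lemma gmap_b : ∀ a b c d : Fin 4, a ≠ b → gmap a b c d b = 1 := by decide
lemma gmap_c : ∀ a b c d : Fin 4, a ≠ c → b ≠ c → gmap a b c d c = 2 := by decide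
lemma gmap_d : ∀ a b c d : Fin 4, a ≠ d → b ≠ d → c ≠ d → gmap a b c d d = 3 := by decide


lemma key (x1 x2 x4 x5 x6 x7 x9 x10 x12 x13 x14 x16 x17 x18 x20 x21 x23 x24 x25 x27 x28 x29 x30 : Fin 4)
    (e0 : x1 ≠ x2)
    (e1 : x1 ≠ x4)
    (e2 : x1 ≠ x5)
    (e3 : x1 ≠ x12)
    (e4 : x2 ≠ x5)
    (e5 : x2 ≠ x12)
    (e6 : x2 ≠ x13)
    (e7 : x2 ≠ x14)
    (e8 : x4 ≠ x5)
    (e9 : x4 ≠ x6)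
    (e10 : x4 ≠ x7)
    (e11 : x5 ≠ x6)
    (e12 : x5 ≠ x7)
    (e13 : x5 ≠ x12)
    (e14 : x5 ≠ x16)
    (e15 : x5 ≠ x20)
    (e16 : x6 ≠ x7)
    (e17 : x6 ≠ x9)
    (e18 : x7 ≠ x9)
    (e19 : x7 ≠ x10)
    (e20 : x7 ≠ x16)
    (e21 : x7 ≠ x20)
    (e22 : x7 ≠ x23)
    (e23 : x9 ≠ x10)
    (e24 : x9 ≠ x23)
    (e25 : x10 ≠ x23)
    (e26 : x10 ≠ x24)
    (e27 : x10 ≠ x25)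
    (e28 : x12 ≠ x13)
    (e29 : x12 ≠ x16)
    (e30 : x12 ≠ x17)
    (e31 : x13 ≠ x14)
    (e32 : x13 ≠ x16)
    (e33 : x13 ≠ x17)
    (e34 : x13 ≠ x18)
    (e35 : x14 ≠ x17)
    (e36 : x14 ≠ x18)
    (e37 : x16 ≠ x17)
    (e38 : x16 ≠ x20)
    (e39 : x16 ≠ x27)
    (e40 : x17 ≠ x18)
    (e41 : x17 ≠ x20)
    (e42 : x17 ≠ x21)
    (e43 : x17 ≠ x27)
    (e44 : x17 ≠ x28)
    (e45 : x18 ≠ x21)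
    (e46 : x18 ≠ x28)
    (e47 : x20 ≠ x23)
    (e48 : x20 ≠ x24)
    (e49 : x20 ≠ x27)
    (e50 : x20 ≠ x29)
    (e51 : x21 ≠ x24)
    (e52 : x21 ≠ x25)
    (e53 : x21 ≠ x28)
    (e54 : x21 ≠ x30)
    (e55 : x23 ≠ x24)
    (e56 : x23 ≠ x29)
    (e57 : x24 ≠ x25)
    (e58 : x24 ≠ x29)
    (e59 : x24 ≠ x30)
    (e60 : x25 ≠ x30)
    (e61 : x27 ≠ x28)
    (e62 : x27 ≠ x29)
    (e63 : x27 ≠ x30)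
    (e64 : x28 ≠ x29)
    (e65 : x28 ≠ x30)
    (e66 : x29 ≠ x30) : False := by
  apply key0 (gmap x27 x28 x29 x30 x1) (gmap x27 x28 x29 x30 x2) (gmap x27 x28 x29 x30 x4) (gmap x27 x28 x29 x30 x5) (gmap x27 x28 x29 x30 x6) (gmap x27 x28 x29 x30 x7) (gmap x27 x28 x29 x30 x9) (gmap x27 x28 x29 x30 x10) (gmap x27 x28 x29 x30 x12) (gmap x27 x28 x29 x30 x13) (gmap x27 x28 x29 x30 x14) (gmap x27 x28 x29 x30 x16) (gmap x27 x28 x29 x30 x17) (gmap x27 x28 x29 x30 x18) (gmap x27 x28 x29 x30 x20) (gmap x27 x28 x29 x30 x21) (gmap x27 x28 x29 x30 x23) (gmap x27 x28 x29 x30 x24) (gmap x27 x28 x29 x30 x25)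
  · exact gmap_ne x27 x28 x29 x30 e61 e62 e63 e64 e65 e66 _ _ e0
  · exact gmap_ne x27 x28 x29 x30 e61 e62 e63 e64 e65 e66 _ _ e1
  · exact gmap_ne x27 x28 x29 x30 e61 e62 e63 e64 e65 e66 _ _ e2
  · exact gmap_ne x27 x28 x29 x30 e61 e62 e63 e64 e65 e66 _ _ e3
  · exact gmap_ne x27 x28 x29 x30 e61 e62 e63 e64 e65 e66 _ _ e4
  · exact gmap_ne x27 x28 x29 x30 e61 e62 e63 e64 e65 e66 _ _ e5
  · exact gmap_ne x27 x28 x29 x30 e61 e62 e63 e64 e65 e66 _ _ e6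
  · exact gmap_ne x27 x28 x29 x30 e61 e62 e63 e64 e65 e66 _ _ e7
  · exact gmap_ne x27 x28 x29 x30 e61 e62 e63 e64 e65 e66 _ _ e8
  · exact gmap_ne x27 x28 x29 x30 e61 e62 e63 e64 e65 e66 _ _ e9
  · exact gmap_ne x27 x28 x29 x30 e61 e62 e63 e64 e65 e66 _ _ e10
  · exact gmap_ne x27 x28 x29 x30 e61 e62 e63 e64 e65 e66 _ _ e11
  · exact gmap_ne x27 x28 x29 x30 e61 e62 e63 e64 e65 e66 _ _ e12
  · exact gmap_ne x27 x28 x29 x30 e61 e62 e63 e64 e65 e66 _ _ e13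
  · exact gmap_ne x27 x28 x29 x30 e61 e62 e63 e64 e65 e66 _ _ e14
  · exact gmap_ne x27 x28 x29 x30 e61 e62 e63 e64 e65 e66 _ _ e15
  · exact gmap_ne x27 x28 x29 x30 e61 e62 e63 e64 e65 e66 _ _ e16
  · exact gmap_ne x27 x28 x29 x30 e61 e62 e63 e64 e65 e66 _ _ e17
  · exact gmap_ne x27 x28 x29 x30 e61 e62 e63 e64 e65 e66 _ _ e18
  · exact gmap_ne x27 x28 x29 x30 e61 e62 e63 e64 e65 e66 _ _ e19
  · exact gmap_ne x27 x28 x29 x30 e61 e62 e63 e64 e65 e66 _ _ e20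
  · exact gmap_ne x27 x28 x29 x30 e61 e62 e63 e64 e65 e66 _ _ e21
  · exact gmap_ne x27 x28 x29 x30 e61 e62 e63 e64 e65 e66 _ _ e22
  · exact gmap_ne x27 x28 x29 x30 e61 e62 e63 e64 e65 e66 _ _ e23
  · exact gmap_ne x27 x28 x29 x30 e61 e62 e63 e64 e65 e66 _ _ e24
  · exact gmap_ne x27 x28 x29 x30 e61 e62 e63 e64 e65 e66 _ _ e25
  · exact gmap_ne x27 x28 x29 x30 e61 e62 e63 e64 e65 e66 _ _ e26
  · exact gmap_ne x27 x28 x29 x30 e61 e62 e63 e64 e65 e66 _ _ e27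
  · exact gmap_ne x27 x28 x29 x30 e61 e62 e63 e64 e65 e66 _ _ e28
  · exact gmap_ne x27 x28 x29 x30 e61 e62 e63 e64 e65 e66 _ _ e29
  · exact gmap_ne x27 x28 x29 x30 e61 e62 e63 e64 e65 e66 _ _ e30
  · exact gmap_ne x27 x28 x29 x30 e61 e62 e63 e64 e65 e66 _ _ e31
  · exact gmap_ne x27 x28 x29 x30 e61 e62 e63 e64 e65 e66 _ _ e32
  · exact gmap_ne x27 x28 x29 x30 e61 e62 e63 e64 e65 e66 _ _ e33
  · exact gmap_ne x27 x28 x29 x30 e61 e62 e63 e64 e65 e66 _ _ e34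
  · exact gmap_ne x27 x28 x29 x30 e61 e62 e63 e64 e65 e66 _ _ e35
  · exact gmap_ne x27 x28 x29 x30 e61 e62 e63 e64 e65 e66 _ _ e36
  · exact gmap_ne x27 x28 x29 x30 e61 e62 e63 e64 e65 e66 _ _ e37
  · exact gmap_ne x27 x28 x29 x30 e61 e62 e63 e64 e65 e66 _ _ e38
  · have hh := gmap_ne x27 x28 x29 x30 e61 e62 e63 e64 e65 e66 _ _ e39
    rwa [gmap_a x27 x28 x29 x30] at hh
  · exact gmap_ne x27 x28 x29 x30 e61 e62 e63 e64 e65 e66 _ _ e40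
  · exact gmap_ne x27 x28 x29 x30 e61 e62 e63 e64 e65 e66 _ _ e41
  · exact gmap_ne x27 x28 x29 x30 e61 e62 e63 e64 e65 e66 _ _ e42
  · have hh := gmap_ne x27 x28 x29 x30 e61 e62 e63 e64 e65 e66 _ _ e43
    rwa [gmap_a x27 x28 x29 x30] at hh
  · have hh := gmap_ne x27 x28 x29 x30 e61 e62 e63 e64 e65 e66 _ _ e44
    rwa [gmap_b x27 x28 x29 x30 e61] at hh
  · exact gmap_ne x27 x28 x29 x30 e61 e62 e63 e64 e65 e66 _ _ e45
  · have hh := gmap_ne x27 x28 x29 x30 e61 e62 e63 e64 e65 e66 _ _ e46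
    rwa [gmap_b x27 x28 x29 x30 e61] at hh
  · exact gmap_ne x27 x28 x29 x30 e61 e62 e63 e64 e65 e66 _ _ e47
  · exact gmap_ne x27 x28 x29 x30 e61 e62 e63 e64 e65 e66 _ _ e48
  · have hh := gmap_ne x27 x28 x29 x30 e61 e62 e63 e64 e65 e66 _ _ e49
    rwa [gmap_a x27 x28 x29 x30] at hh
  · have hh := gmap_ne x27 x28 x29 x30 e61 e62 e63 e64 e65 e66 _ _ e50
    rwa [gmap_c x27 x28 x29 x30 e62 e64] at hh
  · exact gmap_ne x27 x28 x29 x30 e61 e62 e63 e64 e65 e66 _ _ e51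
  · exact gmap_ne x27 x28 x29 x30 e61 e62 e63 e64 e65 e66 _ _ e52
  · have hh := gmap_ne x27 x28 x29 x30 e61 e62 e63 e64 e65 e66 _ _ e53
    rwa [gmap_b x27 x28 x29 x30 e61] at hh
  · have hh := gmap_ne x27 x28 x29 x30 e61 e62 e63 e64 e65 e66 _ _ e54
    rwa [gmap_d x27 x28 x29 x30 e63 e65 e66] at hh
  · exact gmap_ne x27 x28 x29 x30 e61 e62 e63 e64 e65 e66 _ _ e55
  · have hh := gmap_ne x27 x28 x29 x30 e61 e62 e63 e64 e65 e66 _ _ e56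
    rwa [gmap_c x27 x28 x29 x30 e62 e64] at hh
  · exact gmap_ne x27 x28 x29 x30 e61 e62 e63 e64 e65 e66 _ _ e57
  · have hh := gmap_ne x27 x28 x29 x30 e61 e62 e63 e64 e65 e66 _ _ e58
    rwa [gmap_c x27 x28 x29 x30 e62 e64] at hh
  · have hh := gmap_ne x27 x28 x29 x30 e61 e62 e63 e64 e65 e66 _ _ e59
    rwa [gmap_d x27 x28 x29 x30 e63 e65 e66] at hh
  · have hh := gmap_ne x27 x28 x29 x30 e61 e62 e63 e64 e65 e66 _ _ e60
    rwa [gmap_d x27 x28 x29 x30 e63 e65 e66] at hh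

def a0 : DyadicSquare := ⟨2, 0, 0, by norm_num, by norm_num⟩
def a1 : DyadicSquare := ⟨2, 0, 1, by norm_num, by norm_num⟩
def a2 : DyadicSquare := ⟨2, 0, 2, by norm_num, by norm_num⟩
def a3 : DyadicSquare := ⟨2, 0, 3, by norm_num, by norm_num⟩
def a4 : DyadicSquare := ⟨2, 1, 0, by norm_num, by norm_num⟩
def a5 : DyadicSquare := ⟨2, 1, 1, by norm_num, by norm_num⟩
def a6 : DyadicSquare := ⟨2, 2, 0, by norm_num, by norm_num⟩
def a7 : DyadicSquare := ⟨2, 2, 1, by norm_num, by norm_num⟩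
def a8 : DyadicSquare := ⟨2, 3, 0, by norm_num, by norm_num⟩
def a9 : DyadicSquare := ⟨2, 3, 1, by norm_num, by norm_num⟩
def a10 : DyadicSquare := ⟨2, 3, 2, by norm_num, by norm_num⟩
def a11 : DyadicSquare := ⟨2, 3, 3, by norm_num, by norm_num⟩
def a12 : DyadicSquare := ⟨3, 2, 4, by norm_num, by norm_num⟩
def a13 : DyadicSquare := ⟨3, 2, 5, by norm_num, by norm_num⟩
def a14 : DyadicSquare := ⟨3, 2, 6, by norm_num, by norm_num⟩
def a15 : DyadicSquare := ⟨3, 2, 7, by norm_num, by norm_num⟩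
def a16 : DyadicSquare := ⟨3, 3, 4, by norm_num, by norm_num⟩
def a17 : DyadicSquare := ⟨3, 3, 5, by norm_num, by norm_num⟩
def a18 : DyadicSquare := ⟨3, 3, 6, by norm_num, by norm_num⟩
def a19 : DyadicSquare := ⟨3, 3, 7, by norm_num, by norm_num⟩
def a20 : DyadicSquare := ⟨3, 4, 4, by norm_num, by norm_num⟩
def a21 : DyadicSquare := ⟨3, 4, 6, by norm_num, by norm_num⟩
def a22 : DyadicSquare := ⟨3, 4, 7, by norm_num, by norm_num⟩
def a23 : DyadicSquare := ⟨3, 5, 4, by norm_num, by norm_num⟩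
def a24 : DyadicSquare := ⟨3, 5, 5, by norm_num, by norm_num⟩
def a25 : DyadicSquare := ⟨3, 5, 6, by norm_num, by norm_num⟩
def a26 : DyadicSquare := ⟨3, 5, 7, by norm_num, by norm_num⟩
def a27 : DyadicSquare := ⟨4, 8, 10, by norm_num, by norm_num⟩
def a28 : DyadicSquare := ⟨4, 8, 11, by norm_num, by norm_num⟩
def a29 : DyadicSquare := ⟨4, 9, 10, by norm_num, by norm_num⟩
def a30 : DyadicSquare := ⟨4, 9, 11, by norm_num, by norm_num⟩

def Q : Finset DyadicSquare := {a0, a4, a1, a5, a6, a8, a7, a9, a2, a12, a16, a13, a17, a3, a14, a18, a15, a19, a20, a23, a27, a29, a28, a30, a24, a10, a21, a25, a22, a26, a11}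


def T : QT :=
  .node
    (.node .leaf .leaf .leaf .leaf)
    (.node .leaf .leaf .leaf .leaf)
    (.node .leaf (.node .leaf .leaf .leaf .leaf) .leaf (.node .leaf .leaf .leaf .leaf))
    (.node (.node .leaf .leaf (.node .leaf .leaf .leaf .leaf) .leaf) .leaf
      (.node .leaf .leaf .leaf .leaf) .leaf)


lemma region_mk (k i j : ℕ) (h1 : i < 2^k) (h2 : j < 2^k) :
    DyadicSquare.region ⟨k, i, j, h1, h2⟩ = rOf k i j := rfl

lemma union_eq : (⋃ s ∈ Q, DyadicSquare.region s) = rOf 0 0 0 := by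
  rw [← us_eq T 0 0 0]
  show (⋃ s ∈ Q, DyadicSquare.region s) = us T 0 0 0
  simp only [Q, a0, a1, a2, a3, a4, a5, a6, a7, a8, a9, a10, a11, a12, a13, a14, a15, a16, a17, a18, a19, a20, a21, a22, a23, a24, a25, a26, a27, a28, a29, a30, Finset.set_biUnion_insert, Finset.set_biUnion_singleton, region_mk,
    T, us]
  norm_num [Set.union_assoc]


lemma pdi : PairwiseDisjointInteriors Q := by
  have key : ∀ s ∈ Q, ∀ t ∈ Q, s ≠ t → DyadicSquare.sep s t := by decide
  intro s hs t ht hne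
  exact DyadicSquare.disj_of_nat (key s hs t ht hne)

lemma bal : IsBalanced Q := by
  have key : ∀ s ∈ Q, ∀ t ∈ Q,
      (DyadicSquare.covX s t ∧ DyadicSquare.covY s t ∧
        (DyadicSquare.strX s t ∨ DyadicSquare.strY s t)) →
      s.k ≤ t.k + 1 ∧ t.k ≤ s.k + 1 := by decide
  intro s hs t ht h
  exact key s hs t ht (DyadicSquare.edge_nat h)


/-- Some balanced quadtree admits no proper 4-coloring under corner adjacency. -/
theorem balanced_quadtree_not_four_colorable_corner :
    ∃ Q : Finset DyadicSquare, IsQuadtree Q ∧ IsBalanced Q ∧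
      ¬ ∃ f : DyadicSquare → Fin 4,
          ∀ s ∈ Q, ∀ t ∈ Q, DyadicSquare.CornerAdj s t → f s ≠ f t := by
  refine ⟨Q, ⟨pdi, ?_⟩, bal, ?_⟩
  · rw [union_eq]
    norm_num [rOf]
  · rintro ⟨f, hf⟩
    have e0 : f a1 ≠ f a2 := hf a1 (by decide) a2 (by decide) (DyadicSquare.corner_of_nat (by decide) (by decide) (by decide))
    have e1 : f a1 ≠ f a4 := hf a1 (by decide) a4 (by decide) (DyadicSquare.corner_of_nat (by decide) (by decide) (by decide))
    have e2 : f a1 ≠ f a5 := hf a1 (by decide) a5 (by decide) (DyadicSquare.corner_of_nat (by decide) (by decide) (by decide))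
    have e3 : f a1 ≠ f a12 := hf a1 (by decide) a12 (by decide) (DyadicSquare.corner_of_nat (by decide) (by decide) (by decide))
    have e4 : f a2 ≠ f a5 := hf a2 (by decide) a5 (by decide) (DyadicSquare.corner_of_nat (by decide) (by decide) (by decide))
    have e5 : f a2 ≠ f a12 := hf a2 (by decide) a12 (by decide) (DyadicSquare.corner_of_nat (by decide) (by decide) (by decide))
    have e6 : f a2 ≠ f a13 := hf a2 (by decide) a13 (by decide) (DyadicSquare.corner_of_nat (by decide) (by decide) (by decide))
    have e7 : f a2 ≠ f a14 := hf a2 (by decide) a14 (by decide) (DyadicSquare.corner_of_nat (by decide) (by decide) (by decide))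
    have e8 : f a4 ≠ f a5 := hf a4 (by decide) a5 (by decide) (DyadicSquare.corner_of_nat (by decide) (by decide) (by decide))
    have e9 : f a4 ≠ f a6 := hf a4 (by decide) a6 (by decide) (DyadicSquare.corner_of_nat (by decide) (by decide) (by decide))
    have e10 : f a4 ≠ f a7 := hf a4 (by decide) a7 (by decide) (DyadicSquare.corner_of_nat (by decide) (by decide) (by decide))
    have e11 : f a5 ≠ f a6 := hf a5 (by decide) a6 (by decide) (DyadicSquare.corner_of_nat (by decide) (by decide) (by decide))
    have e12 : f a5 ≠ f a7 := hf a5 (by decide) a7 (by decide) (DyadicSquare.corner_of_nat (by decide) (by decide) (by decide))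
    have e13 : f a5 ≠ f a12 := hf a5 (by decide) a12 (by decide) (DyadicSquare.corner_of_nat (by decide) (by decide) (by decide))
    have e14 : f a5 ≠ f a16 := hf a5 (by decide) a16 (by decide) (DyadicSquare.corner_of_nat (by decide) (by decide) (by decide))
    have e15 : f a5 ≠ f a20 := hf a5 (by decide) a20 (by decide) (DyadicSquare.corner_of_nat (by decide) (by decide) (by decide))
    have e16 : f a6 ≠ f a7 := hf a6 (by decide) a7 (by decide) (DyadicSquare.corner_of_nat (by decide) (by decide) (by decide))
    have e17 : f a6 ≠ f a9 := hf a6 (by decide) a9 (by decide) (DyadicSquare.corner_of_nat (by decide) (by decide) (by decide))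
    have e18 : f a7 ≠ f a9 := hf a7 (by decide) a9 (by decide) (DyadicSquare.corner_of_nat (by decide) (by decide) (by decide))
    have e19 : f a7 ≠ f a10 := hf a7 (by decide) a10 (by decide) (DyadicSquare.corner_of_nat (by decide) (by decide) (by decide))
    have e20 : f a7 ≠ f a16 := hf a7 (by decide) a16 (by decide) (DyadicSquare.corner_of_nat (by decide) (by decide) (by decide))
    have e21 : f a7 ≠ f a20 := hf a7 (by decide) a20 (by decide) (DyadicSquare.corner_of_nat (by decide) (by decide) (by decide))
    have e22 : f a7 ≠ f a23 := hf a7 (by decide) a23 (by decide) (DyadicSquare.corner_of_nat (by decide) (by decide) (by decide))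
    have e23 : f a9 ≠ f a10 := hf a9 (by decide) a10 (by decide) (DyadicSquare.corner_of_nat (by decide) (by decide) (by decide))
    have e24 : f a9 ≠ f a23 := hf a9 (by decide) a23 (by decide) (DyadicSquare.corner_of_nat (by decide) (by decide) (by decide))
    have e25 : f a10 ≠ f a23 := hf a10 (by decide) a23 (by decide) (DyadicSquare.corner_of_nat (by decide) (by decide) (by decide))
    have e26 : f a10 ≠ f a24 := hf a10 (by decide) a24 (by decide) (DyadicSquare.corner_of_nat (by decide) (by decide) (by decide))
    have e27 : f a10 ≠ f a25 := hf a10 (by decide) a25 (by decide) (DyadicSquare.corner_of_nat (by decide) (by decide) (by decide))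
    have e28 : f a12 ≠ f a13 := hf a12 (by decide) a13 (by decide) (DyadicSquare.corner_of_nat (by decide) (by decide) (by decide))
    have e29 : f a12 ≠ f a16 := hf a12 (by decide) a16 (by decide) (DyadicSquare.corner_of_nat (by decide) (by decide) (by decide))
    have e30 : f a12 ≠ f a17 := hf a12 (by decide) a17 (by decide) (DyadicSquare.corner_of_nat (by decide) (by decide) (by decide))
    have e31 : f a13 ≠ f a14 := hf a13 (by decide) a14 (by decide) (DyadicSquare.corner_of_nat (by decide) (by decide) (by decide))
    have e32 : f a13 ≠ f a16 := hf a13 (by decide) a16 (by decide) (DyadicSquare.corner_of_nat (by decide) (by decide) (by decide))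
    have e33 : f a13 ≠ f a17 := hf a13 (by decide) a17 (by decide) (DyadicSquare.corner_of_nat (by decide) (by decide) (by decide))
    have e34 : f a13 ≠ f a18 := hf a13 (by decide) a18 (by decide) (DyadicSquare.corner_of_nat (by decide) (by decide) (by decide))
    have e35 : f a14 ≠ f a17 := hf a14 (by decide) a17 (by decide) (DyadicSquare.corner_of_nat (by decide) (by decide) (by decide))
    have e36 : f a14 ≠ f a18 := hf a14 (by decide) a18 (by decide) (DyadicSquare.corner_of_nat (by decide) (by decide) (by decide))
    have e37 : f a16 ≠ f a17 := hf a16 (by decide) a17 (by decide) (DyadicSquare.corner_of_nat (by decide) (by decide) (by decide))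
    have e38 : f a16 ≠ f a20 := hf a16 (by decide) a20 (by decide) (DyadicSquare.corner_of_nat (by decide) (by decide) (by decide))
    have e39 : f a16 ≠ f a27 := hf a16 (by decide) a27 (by decide) (DyadicSquare.corner_of_nat (by decide) (by decide) (by decide))
    have e40 : f a17 ≠ f a18 := hf a17 (by decide) a18 (by decide) (DyadicSquare.corner_of_nat (by decide) (by decide) (by decide))
    have e41 : f a17 ≠ f a20 := hf a17 (by decide) a20 (by decide) (DyadicSquare.corner_of_nat (by decide) (by decide) (by decide))
    have e42 : f a17 ≠ f a21 := hf a17 (by decide) a21 (by decide) (DyadicSquare.corner_of_nat (by decide) (by decide) (by decide))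
    have e43 : f a17 ≠ f a27 := hf a17 (by decide) a27 (by decide) (DyadicSquare.corner_of_nat (by decide) (by decide) (by decide))
    have e44 : f a17 ≠ f a28 := hf a17 (by decide) a28 (by decide) (DyadicSquare.corner_of_nat (by decide) (by decide) (by decide))
    have e45 : f a18 ≠ f a21 := hf a18 (by decide) a21 (by decide) (DyadicSquare.corner_of_nat (by decide) (by decide) (by decide))
    have e46 : f a18 ≠ f a28 := hf a18 (by decide) a28 (by decide) (DyadicSquare.corner_of_nat (by decide) (by decide) (by decide))
    have e47 : f a20 ≠ f a23 := hf a20 (by decide) a23 (by decide) (DyadicSquare.corner_of_nat (by decide) (by decide) (by decide))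
    have e48 : f a20 ≠ f a24 := hf a20 (by decide) a24 (by decide) (DyadicSquare.corner_of_nat (by decide) (by decide) (by decide))
    have e49 : f a20 ≠ f a27 := hf a20 (by decide) a27 (by decide) (DyadicSquare.corner_of_nat (by decide) (by decide) (by decide))
    have e50 : f a20 ≠ f a29 := hf a20 (by decide) a29 (by decide) (DyadicSquare.corner_of_nat (by decide) (by decide) (by decide))
    have e51 : f a21 ≠ f a24 := hf a21 (by decide) a24 (by decide) (DyadicSquare.corner_of_nat (by decide) (by decide) (by decide))
    have e52 : f a21 ≠ f a25 := hf a21 (by decide) a25 (by decide) (DyadicSquare.corner_of_nat (by decide) (by decide) (by decide))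
    have e53 : f a21 ≠ f a28 := hf a21 (by decide) a28 (by decide) (DyadicSquare.corner_of_nat (by decide) (by decide) (by decide))
    have e54 : f a21 ≠ f a30 := hf a21 (by decide) a30 (by decide) (DyadicSquare.corner_of_nat (by decide) (by decide) (by decide))
    have e55 : f a23 ≠ f a24 := hf a23 (by decide) a24 (by decide) (DyadicSquare.corner_of_nat (by decide) (by decide) (by decide))
    have e56 : f a23 ≠ f a29 := hf a23 (by decide) a29 (by decide) (DyadicSquare.corner_of_nat (by decide) (by decide) (by decide))
    have e57 : f a24 ≠ f a25 := hf a24 (by decide) a25 (by decide) (DyadicSquare.corner_of_nat (by decide) (by decide) (by decide))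
    have e58 : f a24 ≠ f a29 := hf a24 (by decide) a29 (by decide) (DyadicSquare.corner_of_nat (by decide) (by decide) (by decide))
    have e59 : f a24 ≠ f a30 := hf a24 (by decide) a30 (by decide) (DyadicSquare.corner_of_nat (by decide) (by decide) (by decide))
    have e60 : f a25 ≠ f a30 := hf a25 (by decide) a30 (by decide) (DyadicSquare.corner_of_nat (by decide) (by decide) (by decide))
    have e61 : f a27 ≠ f a28 := hf a27 (by decide) a28 (by decide) (DyadicSquare.corner_of_nat (by decide) (by decide) (by decide))
    have e62 : f a27 ≠ f a29 := hf a27 (by decide) a29 (by decide) (DyadicSquare.corner_of_nat (by decide) (by decide) (by decide))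
    have e63 : f a27 ≠ f a30 := hf a27 (by decide) a30 (by decide) (DyadicSquare.corner_of_nat (by decide) (by decide) (by decide))
    have e64 : f a28 ≠ f a29 := hf a28 (by decide) a29 (by decide) (DyadicSquare.corner_of_nat (by decide) (by decide) (by decide))
    have e65 : f a28 ≠ f a30 := hf a28 (by decide) a30 (by decide) (DyadicSquare.corner_of_nat (by decide) (by decide) (by decide))
    have e66 : f a29 ≠ f a30 := hf a29 (by decide) a30 (by decide) (DyadicSquare.corner_of_nat (by decide) (by decide) (by decide))
    exact key (f a1) (f a2) (f a4) (f a5) (f a6) (f a7) (f a9) (f a10) (f a12) (f a13) (f a14) (f a16) (f a17) (f a18) (f a20) (f a21) (f a23) (f a24) (f a25) (f a27) (f a28) (f a29) (f a30) e0 e1 e2 e3 e4 e5 e6 e7 e8 e9 e10 e11 e12 e13 e14 e15 e16 e17 e18 e19 e20 e21 e22 e23 e24 e25 e26 e27 e28 e29 e30 e31 e32 e33 e34 e35 e36 e37 e38 e39 e40 e41 e42 e43 e44 e45 e46 e47 e48 e49 e50 e51 e52 e53 e54 e55 e56 e57 e58 e59 e60 e61 e62 e63 e64 e65 e66
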